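/- arXiv:1702.08202 — 3 statements merged into one kernel-verified Lean document; each statement's English description precedes it below -/
import Mathlib

section
/- There exists a noncommutative ring R of order 8 and characteristic 4 such that a² ∈ 2R for every a ∈ R, and every element of R is nilpotent. -/
/-! The witness consists of the matrices `[[x, b], [0, 0]]` over `ℤ/4` with `x ∈ (2)`. Since the
second row vanishes, `M * N = M₀₀ • N`; hence `a * a = a₀₀ • a` is twice `(a₀₀ / 2) • a`, and
`a * a * a = a₀₀² • a = 0` because `(2)² = 0`. The product of `[[2, 0], [0, 0]]` and
`[[0, 1], [0, 0]]` is `[[0, 2], [0, 0]]` in one order and `0` in the other. -/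

/-- Iterated product: npow' a n = a^(n+1) in a non-unital ring. -/
def npow' {R : Type*} [NonUnitalRing R] (a : R) : ℕ → R
  | 0 => a
  | n + 1 => npow' a n * a

section TopRow

variable {R : Type*} [CommRing R]

theorem Matrix.mul_eq_smul_of_row_one_eq_zero {M N : Matrix (Fin 2) (Fin 2) R}
    (hM : ∀ j, M 1 j = 0) (hN : ∀ j, N 1 j = 0) : M * N = M 0 0 • N := by
  ext i j
  fin_cases i <;> simp [Matrix.mul_apply, Fin.sum_univ_two, hM, hN]

def topRowMatrixSubring (I : Ideal R) : NonUnitalSubring (Matrix (Fin 2) (Fin 2) R) where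
  carrier := {M | M 0 0 ∈ I ∧ ∀ j, M 1 j = 0}
  zero_mem' := ⟨I.zero_mem, fun _ => rfl⟩
  add_mem' := fun ⟨hM, hM₁⟩ ⟨hN, hN₁⟩ => ⟨I.add_mem hM hN, by simp [hM₁, hN₁]⟩
  neg_mem' := fun ⟨hM, hM₁⟩ => ⟨I.neg_mem_iff.mpr hM, by simp [hM₁]⟩
  mul_mem' := fun {M N} ⟨hM, hM₁⟩ ⟨_, hN₁⟩ => by
    rw [Set.mem_ofPred_eq, Matrix.mul_eq_smul_of_row_one_eq_zero hM₁ hN₁]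
    exact ⟨I.mul_mem_right _ hM, by simp [hN₁]⟩

namespace topRowMatrixSubring

variable {I : Ideal R}

theorem smul_mem (c : R) {M : Matrix (Fin 2) (Fin 2) R} (hM : M ∈ topRowMatrixSubring I) :
    c • M ∈ topRowMatrixSubring I :=
  ⟨by simpa using I.mul_mem_left c hM.1, by simp [hM.2]⟩

theorem single_zero_zero_mem {x : R} (hx : x ∈ I) :
    Matrix.single 0 0 x ∈ topRowMatrixSubring I :=
  ⟨by simpa using hx, by simp⟩

theorem single_zero_one_mem (x : R) : Matrix.single 0 1 x ∈ topRowMatrixSubring I :=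
  ⟨by simp, by simp⟩

theorem val_mul_eq_smul (a b : topRowMatrixSubring I) : (a * b).1 = a.1 0 0 • b.1 :=
  Matrix.mul_eq_smul_of_row_one_eq_zero a.2.2 b.2.2

theorem mul_self_eq_add_self (hI : I ≤ Ideal.span {2}) (a : topRowMatrixSubring I) :
    ∃ r, a * a = r + r := by
  obtain ⟨c, hc⟩ := Ideal.mem_span_singleton'.mp (hI a.2.1)
  refine ⟨⟨c • a, smul_mem c a.2⟩, Subtype.ext ?_⟩
  rw [val_mul_eq_smul, ← hc, NonUnitalSubring.val_add, mul_smul, two_smul, smul_add]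

theorem mul_self_mul_eq_zero (hI : I ^ 2 = ⊥) (a : topRowMatrixSubring I) : a * a * a = 0 := by
  have hsq : a.1 0 0 * a.1 0 0 = 0 := by
    rw [← Ideal.mem_bot, ← hI, pow_two]
    exact Ideal.mul_mem_mul a.2.1 a.2.1
  apply Subtype.ext
  rw [val_mul_eq_smul, val_mul_eq_smul, Matrix.smul_apply, smul_eq_mul, hsq, zero_smul,
    NonUnitalSubring.val_zero]

theorem nsmul_eq_zero_of_charP (n : ℕ) [CharP R n] (a : topRowMatrixSubring I) : n • a = 0 :=
  Subtype.ext <| by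
    rw [AddSubmonoidClass.coe_nsmul, ← Nat.cast_smul_eq_nsmul R, CharP.cast_eq_zero, zero_smul,
      NonUnitalSubring.val_zero]

theorem exists_mul_ne_mul {ε : R} (hε : ε ∈ I) (hε₀ : ε ≠ 0) :
    ∃ a b : topRowMatrixSubring I, a * b ≠ b * a := by
  refine ⟨⟨_, single_zero_zero_mem hε⟩, ⟨_, single_zero_one_mem 1⟩, fun h => hε₀ ?_⟩
  simpa [val_mul_eq_smul] using congrArg (fun c => c.1 0 1) h

theorem exists_add_self_ne_zero (h2 : (2 : R) ≠ 0) : ∃ a : topRowMatrixSubring I, a + a ≠ 0 := by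
  refine ⟨⟨_, single_zero_one_mem 1⟩, fun h => h2 ?_⟩
  simpa [one_add_one_eq_two] using congrArg (fun c => c.1 0 1) h

def equivProd : topRowMatrixSubring I ≃ I × R where
  toFun a := (⟨a.1 0 0, a.2.1⟩, a.1 0 1)
  invFun p := ⟨!![p.1, p.2; 0, 0], p.1.2, by simp [Fin.forall_fin_two]⟩
  left_inv a := Subtype.ext <| by
    ext i j
    fin_cases i <;> fin_cases j <;> simp [a.2.2]
  right_inv _ := rfl

theorem natCard : Nat.card (topRowMatrixSubring I) = Nat.card I * Nat.card R := by
  rw [Nat.card_congr equivProd, Nat.card_prod]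

end topRowMatrixSubring

end TopRow

theorem ZMod.span_two_sq_eq_bot : (Ideal.span {2} : Ideal (ZMod 4)) ^ 2 = ⊥ := by
  rw [Ideal.span_singleton_pow, Ideal.span_singleton_eq_bot]
  decide

theorem ZMod.natCard_span_two : Nat.card (Ideal.span {2} : Ideal (ZMod 4)) = 2 := by
  have h : ((Ideal.span {2} : Ideal (ZMod 4)) : Set (ZMod 4)) = {0, 2} := by
    ext x
    simp only [SetLike.mem_coe, Ideal.mem_span_singleton', Set.mem_insert_iff,
      Set.mem_singleton_iff]
    revert x
    decide
  rw [← SetLike.coe_sort_coe, h, Nat.card_coe_set_eq, Set.ncard_pair (by decide)]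

/-- There exists a noncommutative ring of order 8 and characteristic 4 with
a² ∈ 2R for all a, in which every element is nilpotent. -/
theorem stmt_4 :
    ∃ (R : Type) (_ : NonUnitalRing R) (_ : Fintype R),
      Fintype.card R = 8 ∧
      (∃ a b : R, a * b ≠ b * a) ∧
      (∀ a : R, a + a + a + a = 0) ∧
      (∃ a : R, a + a ≠ 0) ∧
      (∀ a : R, ∃ r : R, a * a = r + r) ∧
      (∀ a : R, ∃ n : ℕ, npow' a n = 0) := by
  let S := topRowMatrixSubring (Ideal.span {2} : Ideal (ZMod 4))
  refine ⟨S, inferInstance, Fintype.ofFinite S, ?_, ?_, ?_, ?_, ?_, ?_⟩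
  · rw [Fintype.card_eq_nat_card, topRowMatrixSubring.natCard, ZMod.natCard_span_two,
      Nat.card_zmod]
  · exact topRowMatrixSubring.exists_mul_ne_mul (Ideal.mem_span_singleton_self 2) (by decide)
  · intro a
    rw [show a + a + a + a = 4 • a by abel]
    exact topRowMatrixSubring.nsmul_eq_zero_of_charP 4 a
  · exact topRowMatrixSubring.exists_add_self_ne_zero (by decide)
  · exact topRowMatrixSubring.mul_self_eq_add_self le_rfl
  · exact fun a => ⟨2, topRowMatrixSubring.mul_self_mul_eq_zero ZMod.span_two_sq_eq_bot a⟩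
end

section
/- There exists a noncommutative even square ring of order 9, and there is no noncommutative ring (hence no noncommutative even square ring) of odd order less than 9. -/
def Rw : Type := ZMod 3 × ZMod 3

instance Rw.addCommGroup : AddCommGroup Rw :=
  inferInstanceAs (AddCommGroup (ZMod 3 × ZMod 3))

instance Rw.fintype : Fintype Rw := inferInstanceAs (Fintype (ZMod 3 × ZMod 3))

instance Rw.mul : Mul Rw := ⟨fun a b => (a.1 * b.1, a.1 * b.2)⟩

lemma Rw.mul_def (a b : Rw) : a * b = (a.1 * b.1, a.1 * b.2) := rfl

instance Rw.nonUnitalRing : NonUnitalRing Rw :=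
  { Rw.addCommGroup, Rw.mul with
    left_distrib := fun a b c => by
      show ((a.1 * (b.1 + c.1), a.1 * (b.2 + c.2)) : ZMod 3 × ZMod 3) = _
      simp [Rw.mul_def, mul_add]; rfl
    right_distrib := fun a b c => by
      show (((a.1 + b.1) * c.1, (a.1 + b.1) * c.2) : ZMod 3 × ZMod 3) = _
      simp [Rw.mul_def, add_mul]; rfl
    zero_mul := fun a => by
      show ((0 * a.1, 0 * a.2) : ZMod 3 × ZMod 3) = 0
      simp
    mul_zero := fun a => by
      show ((a.1 * 0, a.1 * 0) : ZMod 3 × ZMod 3) = 0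
      simp
    mul_assoc := fun a b c => by
      show ((a.1 * b.1 * c.1, a.1 * b.1 * c.2) : ZMod 3 × ZMod 3) = _
      simp [Rw.mul_def, mul_assoc]; rfl }

lemma addCyclic_comm (R : Type) [NonUnitalRing R] [IsAddCyclic R]
    (a b : R) : a * b = b * a := by
  obtain ⟨g, hg⟩ := IsAddCyclic.exists_zsmul_surjective (G := R)
  obtain ⟨m, rfl⟩ := hg a
  obtain ⟨n, rfl⟩ := hg b
  rw [smul_mul_assoc, smul_mul_assoc, mul_smul_comm, mul_smul_comm,
    smul_smul, smul_smul, mul_comm]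

lemma prime_comm (R : Type) [NonUnitalRing R] [Fintype R] (p : ℕ) (hp : p.Prime)
    (h : Fintype.card R = p) (a b : R) : a * b = b * a := by
  have : Fact p.Prime := ⟨hp⟩
  have : IsAddCyclic R := isAddCyclic_of_prime_card (p := p) (by simpa using h)
  exact addCyclic_comm R a b

/-- There exists a noncommutative even square ring of order 9, and every ring of
odd order less than 9 is commutative. -/
theorem stmt_16 :
    (∃ (R : Type) (_ : NonUnitalRing R) (_ : Fintype R),
      Fintype.card R = 9 ∧ (∃ a b : R, a * b ≠ b * a) ∧
      (∀ a : R, ∃ r : R, a * a = r + r)) ∧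
    (∀ (R : Type) [NonUnitalRing R] [Fintype R],
      Fintype.card R % 2 = 1 → Fintype.card R < 9 →
      ∀ a b : R, a * b = b * a) := by
  constructor
  · refine ⟨Rw, Rw.nonUnitalRing, Rw.fintype, ?_, ?_, ?_⟩
    · decide
    · refine ⟨((1 : ZMod 3), (0 : ZMod 3)), ((1 : ZMod 3), (1 : ZMod 3)), ?_⟩
      intro hcon
      have h2 := congrArg Prod.snd hcon
      revert h2; decide
    · intro a
      have key : ∀ z : ZMod 3, z = -z + -z := by decide
      refine ⟨(-(a.1 * a.1), -(a.1 * a.2)), ?_⟩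
      show ((a.1 * a.1, a.1 * a.2) : ZMod 3 × ZMod 3) =
        ((-(a.1 * a.1), -(a.1 * a.2)) : ZMod 3 × ZMod 3) + (-(a.1 * a.1), -(a.1 * a.2))
      exact Prod.ext (key _) (key _)
  · intro R _ _ hodd hlt a b
    have h1 : 1 ≤ Fintype.card R := Fintype.card_pos
    interval_cases h : Fintype.card R
    · have : Subsingleton R := Fintype.card_le_one_iff_subsingleton.mp (by omega)
      exact Subsingleton.elim _ _
    · simp at hodd
    · exact prime_comm R 3 (by norm_num) h a b
    · simp at hodd
    · exact prime_comm R 5 (by norm_num) h a b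
    · simp at hodd
    · exact prime_comm R 7 (by norm_num) h a b
    · simp at hodd
end

section
/- In any finite ring R of order 2ⁿ in which a² ∈ 2R for all a ∈ R, every element is nilpotent (R is a nil ring). -/
lemma npow'_add {R : Type*} [NonUnitalRing R] (a : R) (m n : ℕ) :
    npow' a (m + n + 1) = npow' a m * npow' a n := by
  induction n with
  | zero => rfl
  | succ n ih =>
    change npow' a (m + n + 1) * a = _
    rw [ih, mul_assoc]
    rfl

lemma exists_npow'_two_pow_sub_one_eq_nsmul {R : Type*} [NonUnitalRing R]
    (hsq : ∀ a : R, ∃ r : R, a * a = r + r) (a : R) (k : ℕ) :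
    ∃ r : R, npow' a (2 ^ k - 1) = 2 ^ k • r := by
  induction k with
  | zero => exact ⟨a, (one_smul ℕ a).symm⟩
  | succ k ih =>
    obtain ⟨r, hr⟩ := ih
    obtain ⟨s, hs⟩ := hsq r
    have hidx : 2 ^ (k + 1) - 1 = (2 ^ k - 1) + (2 ^ k - 1) + 1 := by
      have : 1 ≤ 2 ^ k := Nat.one_le_two_pow
      rw [pow_succ]
      omega
    refine ⟨2 ^ k • s, ?_⟩
    calc npow' a (2 ^ (k + 1) - 1)
        = (2 ^ k • r) * (2 ^ k • r) := by rw [hidx, npow'_add, hr]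
      _ = (2 ^ k * 2 ^ k) • (s + s) := by rw [smul_mul_smul_comm, hs]
      _ = 2 ^ (k + 1) • 2 ^ k • s := by
        rw [← two_smul ℕ s, smul_smul, smul_smul, pow_succ]
        ring_nf

/-- Every finite ring of order 2ⁿ with a² ∈ 2R for all a is nil. -/
theorem stmt_19 (R : Type*) [NonUnitalRing R] [Fintype R]
    (hcard : ∃ n : ℕ, 0 < n ∧ Fintype.card R = 2 ^ n)
    (hsq : ∀ a : R, ∃ r : R, a * a = r + r) :
    ∀ a : R, ∃ m : ℕ, npow' a m = 0 := by
  obtain ⟨n, -, hn⟩ := hcard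
  intro a
  obtain ⟨r, hr⟩ := exists_npow'_two_pow_sub_one_eq_nsmul hsq a n
  exact ⟨2 ^ n - 1, by rw [hr, ← hn, card_nsmul_eq_zero]⟩
end
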